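/- For all parameters A, B, C ∈ ℂ with (C;q)_n ≠ 0 for all n, all r ∈ ℕ, all y ∈ ℂ with |y| < 1, and all x ∈ ℂ with 0 < |x| < 1, the r-fold iterated Jackson q₁-derivative in the variable x of the function x ↦ Φ₁(A,B;C;q,q₁;x,y), evaluated at x, equals [(A;q)_r (B;q₁)_r / ((1−q₁)^r (C;q)_r)] · Φ₁(q^r A, q₁^r B; q^r C; q,q₁; x, y). (Equation (2.14).) -/

import Mathlib

open Complex

/-- The q-shifted factorial (z;q)_n = prod_{r=0}^{n-1} (1 - z q^r). -/
noncomputable def qPoch (q z : ℂ) (n : ℕ) : ℂ :=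
  ∏ r ∈ Finset.range n, (1 - z * q ^ r)

/-- The bibasic Humbert hypergeometric function Φ₁ on two independent bases q and q₁. -/
noncomputable def Phi1 (q q1 A B C x y : ℂ) : ℂ :=
  ∑' p : ℕ × ℕ,
    qPoch q A (p.1 + p.2) * qPoch q1 B p.1 /
      (qPoch q C (p.1 + p.2) * qPoch q1 q1 p.1 * qPoch q q p.2) * x ^ p.1 * y ^ p.2

/-- The Jackson p-derivative. -/
noncomputable def jackson (p : ℂ) (f : ℂ → ℂ) (x : ℂ) : ℂ :=
  (f x - f (p * x)) / ((1 - p) * x)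

/-!
The coefficients of the double power series `Φ₁` are bounded: `‖(A;q)_n‖ ≤ exp (‖A‖/(1-‖q‖))`,
and a q-shifted factorial that never vanishes stays bounded away from `0`, because its factors
`1 - z q^n` tend to `1` geometrically fast. So `Φ₁` converges absolutely for `‖x‖, ‖y‖ < 1` and
the Jackson derivative can be taken term by term. Since `D_{q₁} x^(ℓ+1) = [ℓ+1]_{q₁} x^ℓ` and
`[ℓ+1]_{q₁}` cancels the last factor of `(q₁;q₁)_(ℓ+1)`, one gets the contiguous relation
`D_{q₁} Φ₁(A,B;C) = (1-A)(1-B)/((1-q₁)(1-C)) · Φ₁(qA,q₁B;qC)`. On the punctured unit disc, which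
is stable under `x ↦ q₁ x`, this relation iterates, and the product of the first `r` factors is
`(A;q)_r (B;q₁)_r / ((1-q₁)^r (C;q)_r)`.
-/

open Finset

lemma qPoch_succ (q z : ℂ) (n : ℕ) : qPoch q z (n + 1) = qPoch q z n * (1 - z * q ^ n) :=
  prod_range_succ _ _

lemma qPoch_succ' (q z : ℂ) (n : ℕ) : qPoch q z (n + 1) = (1 - z) * qPoch q (q * z) n := by
  rw [qPoch, prod_range_succ', pow_zero, mul_one, mul_comm, qPoch]
  exact congrArg _ (prod_congr rfl fun i _ => by ring)

lemma qPoch_add (q z : ℂ) (m n : ℕ) :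
    qPoch q z (m + n) = qPoch q z m * qPoch q (q ^ m * z) n := by
  rw [qPoch, prod_range_add, qPoch, qPoch]
  exact congrArg _ (prod_congr rfl fun i _ => by ring)

lemma qPoch_self_ne_zero {q : ℂ} (hq : ‖q‖ < 1) (n : ℕ) : qPoch q q n ≠ 0 := by
  refine prod_ne_zero_iff.2 fun i _ => sub_ne_zero.2 fun h => ?_
  have : ‖q * q ^ i‖ < 1 := by
    rw [← pow_succ', norm_pow]
    exact pow_lt_one₀ (norm_nonneg q) hq (Nat.succ_ne_zero i)
  simp [← h] at this

lemma norm_qPoch_le_exp (q z : ℂ) (n : ℕ) :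
    ‖qPoch q z n‖ ≤ Real.exp (‖z‖ * ∑ i ∈ range n, ‖q‖ ^ i) := by
  rw [qPoch, norm_prod, mul_sum, Real.exp_sum]
  refine prod_le_prod (fun i _ => norm_nonneg _) fun i _ => ?_
  calc ‖1 - z * q ^ i‖ ≤ ‖(1 : ℂ)‖ + ‖z * q ^ i‖ := norm_sub_le _ _
    _ = ‖z‖ * ‖q‖ ^ i + 1 := by rw [norm_one, norm_mul, norm_pow, add_comm]
    _ ≤ Real.exp (‖z‖ * ‖q‖ ^ i) := Real.add_one_le_exp _

lemma one_sub_le_norm_qPoch (q z : ℂ) (n : ℕ) :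
    1 - ‖z‖ * ∑ i ∈ range n, ‖q‖ ^ i ≤ ‖qPoch q z n‖ := by
  induction n with
  | zero => simp [qPoch]
  | succ n ih =>
    have hfactor : 1 - ‖z‖ * ‖q‖ ^ n ≤ ‖1 - z * q ^ n‖ := by
      simpa [norm_mul, norm_pow] using norm_sub_norm_le (1 : ℂ) (z * q ^ n)
    have hS : 0 ≤ ‖z‖ * ∑ i ∈ range n, ‖q‖ ^ i := by positivity
    have ha : 0 ≤ ‖z‖ * ‖q‖ ^ n := by positivity
    rw [qPoch_succ, norm_mul, sum_range_succ, mul_add]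
    rcases le_or_gt (‖z‖ * ‖q‖ ^ n) 1 with h | h
    · nlinarith [norm_nonneg (qPoch q z n)]
    · nlinarith [norm_nonneg (qPoch q z n), norm_nonneg (1 - z * q ^ n)]

lemma geom_sum_le_inv_one_sub {x : ℝ} (hx0 : 0 ≤ x) (hx1 : x < 1) (n : ℕ) :
    ∑ i ∈ range n, x ^ i ≤ (1 - x)⁻¹ := by
  have := geom_sum_Ico_le_of_lt_one (m := 0) (n := n) hx0 hx1
  rwa [pow_zero, one_div, ← range_eq_Ico] at this

lemma norm_qPoch_le_of_norm_lt_one {q : ℂ} (hq : ‖q‖ < 1) (z : ℂ) (n : ℕ) :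
    ‖qPoch q z n‖ ≤ Real.exp (‖z‖ * (1 - ‖q‖)⁻¹) :=
  (norm_qPoch_le_exp q z n).trans <| Real.exp_le_exp.2 <|
    mul_le_mul_of_nonneg_left (geom_sum_le_inv_one_sub (norm_nonneg q) hq n) (norm_nonneg z)

lemma exists_pos_forall_le_of_forall_ge {u : ℕ → ℝ} (hu : ∀ n, 0 < u n) {c : ℝ} (hc : 0 < c)
    {N : ℕ} (hN : ∀ n ≥ N, c ≤ u n) : ∃ ε > 0, ∀ n, ε ≤ u n := by
  induction N generalizing c with
  | zero => exact ⟨c, hc, fun n => hN n n.zero_le⟩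
  | succ N ih =>
    refine ih (lt_min hc (hu N)) fun n hn => ?_
    rcases hn.eq_or_lt with rfl | hlt
    · exact min_le_right _ _
    · exact (min_le_left _ _).trans (hN n hlt)

lemma exists_pos_le_norm_qPoch {q z : ℂ} (hq : ‖q‖ < 1) (hz : ∀ n, qPoch q z n ≠ 0) :
    ∃ ε > 0, ∀ n, ε ≤ ‖qPoch q z n‖ := by
  have hq0 := norm_nonneg q
  obtain ⟨N, hN⟩ : ∃ N : ℕ, ‖q‖ ^ N * ‖z‖ * (1 - ‖q‖)⁻¹ ≤ 1 / 2 := by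
    have : Filter.Tendsto (fun N : ℕ => ‖q‖ ^ N * ‖z‖ * (1 - ‖q‖)⁻¹) Filter.atTop (nhds 0) := by
      simpa using ((tendsto_pow_atTop_nhds_zero_of_lt_one hq0 hq).mul_const ‖z‖).mul_const _
    exact (this.eventually (eventually_le_nhds (by norm_num))).exists
  have hPN : 0 < ‖qPoch q z N‖ := norm_pos_iff.2 (hz N)
  refine exists_pos_forall_le_of_forall_ge (fun n => norm_pos_iff.2 (hz n)) (half_pos hPN)
    (N := N) fun n hn => ?_
  obtain ⟨k, rfl⟩ := Nat.exists_eq_add_of_le hn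
  have htail : 1 / 2 ≤ ‖qPoch q (q ^ N * z) k‖ := by
    refine le_trans ?_ (one_sub_le_norm_qPoch q _ k)
    rw [norm_mul, norm_pow]
    have := mul_le_mul_of_nonneg_left (geom_sum_le_inv_one_sub hq0 hq k)
      (by positivity : 0 ≤ ‖q‖ ^ N * ‖z‖)
    linarith
  rw [qPoch_add, norm_mul]
  nlinarith

lemma summable_mul_pow_mul_pow_of_norm_le {a : ℕ × ℕ → ℂ} {K : ℝ} (ha : ∀ i, ‖a i‖ ≤ K)
    {x y : ℂ} (hx : ‖x‖ < 1) (hy : ‖y‖ < 1) :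
    Summable fun i : ℕ × ℕ => a i * x ^ i.1 * y ^ i.2 := by
  have hgeom : Summable fun i : ℕ × ℕ => K * (‖x‖ ^ i.1 * ‖y‖ ^ i.2) :=
    ((summable_geometric_of_lt_one (norm_nonneg x) hx).mul_of_nonneg
      (summable_geometric_of_lt_one (norm_nonneg y) hy)
      (fun i => pow_nonneg (norm_nonneg x) i) (fun i => pow_nonneg (norm_nonneg y) i)).mul_left K
  refine Summable.of_norm_bounded hgeom fun i => ?_
  rw [mul_assoc, norm_mul, norm_mul, norm_pow, norm_pow]
  exact mul_le_mul_of_nonneg_right (ha i) (by positivity)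

lemma jackson_tsum_mul_pow {p x y : ℂ} {a : ℕ × ℕ → ℂ} (hx : x ≠ 0)
    (h₁ : Summable fun i : ℕ × ℕ => a i * x ^ i.1 * y ^ i.2)
    (h₂ : Summable fun i : ℕ × ℕ => a i * (p * x) ^ i.1 * y ^ i.2) :
    jackson p (fun t => ∑' i : ℕ × ℕ, a i * t ^ i.1 * y ^ i.2) x =
      ∑' i : ℕ × ℕ, a (i.1 + 1, i.2) * ((1 - p ^ (i.1 + 1)) / (1 - p)) * x ^ i.1 * y ^ i.2 := by
  rw [jackson, ← h₁.tsum_sub h₂, ← tsum_div_const]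
  have hinj : Function.Injective fun i : ℕ × ℕ => (i.1 + 1, i.2) := by
    rintro ⟨_, _⟩ ⟨_, _⟩ h
    simpa using h
  have hsupp : Function.support (fun i : ℕ × ℕ =>
      (a i * x ^ i.1 * y ^ i.2 - a i * (p * x) ^ i.1 * y ^ i.2) / ((1 - p) * x)) ⊆
      Set.range fun i : ℕ × ℕ => (i.1 + 1, i.2) := by
    rintro ⟨_ | ℓ, k⟩ h
    · simp at h
    · exact ⟨(ℓ, k), rfl⟩
  rw [← hinj.tsum_eq hsupp]
  refine tsum_congr fun i => ?_
  simp only [mul_pow, pow_succ]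
  rcases eq_or_ne p 1 with rfl | hp
  · simp
  · field_simp [sub_ne_zero.2 hp.symm]

noncomputable def phi1Coeff (q q1 A B C : ℂ) (i : ℕ × ℕ) : ℂ :=
  qPoch q A (i.1 + i.2) * qPoch q1 B i.1 /
    (qPoch q C (i.1 + i.2) * qPoch q1 q1 i.1 * qPoch q q i.2)

lemma Phi1_eq_tsum (q q1 A B C x y : ℂ) :
    Phi1 q q1 A B C x y = ∑' i : ℕ × ℕ, phi1Coeff q q1 A B C i * x ^ i.1 * y ^ i.2 :=
  rfl

lemma exists_norm_phi1Coeff_le {q q1 C : ℂ} (A B : ℂ) (hq : ‖q‖ < 1) (hq1 : ‖q1‖ < 1)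
    (hC : ∀ n, qPoch q C n ≠ 0) : ∃ K, ∀ i, ‖phi1Coeff q q1 A B C i‖ ≤ K := by
  obtain ⟨εC, hεC, hCε⟩ := exists_pos_le_norm_qPoch hq hC
  obtain ⟨ε₁, hε₁, hq1ε⟩ := exists_pos_le_norm_qPoch hq1 (qPoch_self_ne_zero hq1)
  obtain ⟨ε, hε, hqε⟩ := exists_pos_le_norm_qPoch hq (qPoch_self_ne_zero hq)
  refine ⟨Real.exp (‖A‖ * (1 - ‖q‖)⁻¹) * Real.exp (‖B‖ * (1 - ‖q1‖)⁻¹) / (εC * ε₁ * ε),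
    fun i => ?_⟩
  rw [phi1Coeff, norm_div, norm_mul, norm_mul, norm_mul]
  gcongr
  · exact norm_qPoch_le_of_norm_lt_one hq _ _
  · exact norm_qPoch_le_of_norm_lt_one hq1 _ _
  · exact hCε _
  · exact hq1ε _
  · exact hqε _

lemma phi1Coeff_succ_mul (q q1 A B C : ℂ) (ℓ k : ℕ) (hC : qPoch q C (ℓ + k + 1) ≠ 0)
    (hq1 : qPoch q1 q1 (ℓ + 1) ≠ 0) (hq : qPoch q q k ≠ 0) :
    phi1Coeff q q1 A B C (ℓ + 1, k) * ((1 - q1 ^ (ℓ + 1)) / (1 - q1)) =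
      (1 - A) * (1 - B) / ((1 - q1) * (1 - C)) * phi1Coeff q q1 (q * A) (q1 * B) (q * C) (ℓ, k) := by
  rw [qPoch_succ'] at hC
  have h1q1 : 1 - q1 ≠ 0 := by
    rw [qPoch_succ'] at hq1
    exact left_ne_zero_of_mul hq1
  rw [qPoch_succ] at hq1
  obtain ⟨h1C, hqC⟩ := mul_ne_zero_iff.1 hC
  obtain ⟨hq1ℓ, h1q1ℓ⟩ := mul_ne_zero_iff.1 hq1
  simp only [phi1Coeff, Nat.add_right_comm ℓ 1 k, qPoch_succ' q A, qPoch_succ' q C, qPoch_succ' q1 B,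
    qPoch_succ q1 q1 ℓ]
  rw [← pow_succ'] at h1q1ℓ ⊢
  field_simp

lemma jackson_Phi1 {q q1 x y : ℂ} (A B : ℂ) {C : ℂ} (hq : ‖q‖ < 1) (hq1 : ‖q1‖ < 1)
    (hC : ∀ n, qPoch q C n ≠ 0) (hx0 : x ≠ 0) (hx : ‖x‖ < 1) (hy : ‖y‖ < 1) :
    jackson q1 (fun t => Phi1 q q1 A B C t y) x =
      (1 - A) * (1 - B) / ((1 - q1) * (1 - C)) * Phi1 q q1 (q * A) (q1 * B) (q * C) x y := by
  obtain ⟨K, hK⟩ := exists_norm_phi1Coeff_le A B hq hq1 hC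
  have hq1x : ‖q1 * x‖ < 1 := by
    rw [norm_mul]
    exact mul_lt_one_of_nonneg_of_lt_one_left (norm_nonneg q1) hq1 hx.le
  simp only [Phi1_eq_tsum]
  rw [jackson_tsum_mul_pow hx0 (summable_mul_pow_mul_pow_of_norm_le hK hx hy)
    (summable_mul_pow_mul_pow_of_norm_le hK hq1x hy), ← tsum_mul_left]
  refine tsum_congr fun i => ?_
  rw [phi1Coeff_succ_mul _ _ _ _ _ _ _ (hC _) (qPoch_self_ne_zero hq1 _)
    (qPoch_self_ne_zero hq _)]
  ring

lemma jackson_congr {p x : ℂ} {f g : ℂ → ℂ} (h : f x = g x) (hp : f (p * x) = g (p * x)) :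
    jackson p f x = jackson p g x := by
  rw [jackson, jackson, h, hp]

lemma jackson_const_mul (p c : ℂ) (f : ℂ → ℂ) (x : ℂ) :
    jackson p (fun t => c * f t) x = c * jackson p f x := by
  rw [jackson, jackson, ← mul_sub, mul_div_assoc]

lemma iterate_jackson_eq_prod_mul {p : ℂ} {S : Set ℂ} (hS : ∀ x ∈ S, p * x ∈ S)
    {F : ℕ → ℂ → ℂ} {c : ℕ → ℂ} (hF : ∀ s, ∀ x ∈ S, jackson p (F s) x = c s * F (s + 1) x)
    (r : ℕ) : ∀ x ∈ S, (jackson p)^[r] (F 0) x = (∏ i ∈ range r, c i) * F r x := by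
  induction r with
  | zero => simp
  | succ r ih =>
    intro x hx
    rw [Function.iterate_succ_apply',
      jackson_congr (g := fun t => (∏ i ∈ range r, c i) * F r t) (ih x hx) (ih _ (hS x hx)),
      jackson_const_mul, hF r x hx, prod_range_succ, mul_assoc]

theorem stmt12_general (q q1 A B C x y : ℂ)
    (hq1 : ‖q‖ < 1)
    (hq10 : 0 < ‖q1‖) (hq11 : ‖q1‖ < 1)
    (hC : ∀ n : ℕ, qPoch q C n ≠ 0)
    (r : ℕ) (hx0 : 0 < ‖x‖) (hx : ‖x‖ < 1) (hy : ‖y‖ < 1) :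
    ((jackson q1)^[r] (fun t => Phi1 q q1 A B C t y)) x =
      qPoch q A r * qPoch q1 B r / ((1 - q1) ^ r * qPoch q C r) *
        Phi1 q q1 (q ^ r * A) (q1 ^ r * B) (q ^ r * C) x y := by
  set S : Set ℂ := {x | 0 < ‖x‖ ∧ ‖x‖ < 1}
  have hS : ∀ x ∈ S, q1 * x ∈ S := fun x ⟨hx0, hx⟩ => by
    show 0 < ‖q1 * x‖ ∧ ‖q1 * x‖ < 1
    rw [norm_mul]
    exact ⟨mul_pos hq10 hx0, mul_lt_one_of_nonneg_of_lt_one_left hq10.le hq11 hx.le⟩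
  have hstep : ∀ s, ∀ x ∈ S, jackson q1 (fun t => Phi1 q q1 (q ^ s * A) (q1 ^ s * B) (q ^ s * C) t y) x =
      (1 - q ^ s * A) * (1 - q1 ^ s * B) / ((1 - q1) * (1 - q ^ s * C)) *
        Phi1 q q1 (q ^ (s + 1) * A) (q1 ^ (s + 1) * B) (q ^ (s + 1) * C) x y := by
    intro s x ⟨hx0, hx⟩
    have hCs : ∀ n, qPoch q (q ^ s * C) n ≠ 0 := fun n =>
      right_ne_zero_of_mul (qPoch_add q C s n ▸ hC (s + n))
    simp only [jackson_Phi1 _ _ hq1 hq11 hCs (norm_pos_iff.1 hx0) hx hy, pow_succ', mul_assoc]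
  have hprod : ∏ i ∈ range r, (1 - q ^ i * A) * (1 - q1 ^ i * B) / ((1 - q1) * (1 - q ^ i * C)) =
      qPoch q A r * qPoch q1 B r / ((1 - q1) ^ r * qPoch q C r) := by
    simp only [prod_div_distrib, prod_mul_distrib, prod_const, card_range, qPoch, mul_comm A,
      mul_comm B, mul_comm C]
  simpa [hprod] using iterate_jackson_eq_prod_mul hS hstep r x ⟨hx0, hx⟩

theorem stmt12 (q q1 A B C x y : ℂ)
    (hq0 : 0 < ‖q‖) (hq1 : ‖q‖ < 1)
    (hq10 : 0 < ‖q1‖) (hq11 : ‖q1‖ < 1)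
    (hC : ∀ n : ℕ, qPoch q C n ≠ 0)
    (r : ℕ) (hx0 : 0 < ‖x‖) (hx : ‖x‖ < 1) (hy : ‖y‖ < 1) :
    ((jackson q1)^[r] (fun t => Phi1 q q1 A B C t y)) x =
      qPoch q A r * qPoch q1 B r / ((1 - q1) ^ r * qPoch q C r) *
        Phi1 q q1 (q ^ r * A) (q1 ^ r * B) (q ^ r * C) x y :=
  stmt12_general q q1 A B C x y hq1 hq10 hq11 hC r hx0 hx hy
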